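/- arXiv:2109.00048 — 3 statements merged into one kernel-verified Lean document; each statement's English description precedes it below -/
import Mathlib

section
/- Let R be a commutative ring of characteristic 2. A power series f ∈ R[[X]] with f(0) = 0 satisfies f(X+Y) = f(X) + f(Y) in R[[X,Y]] if and only if f is a sum ∑_i c_i X^{2^i} of monomials whose exponents are powers of 2. -/
noncomputable section

variable {R : Type} [CommRing R]

/-- Substitution of the variables of a multivariate power series by power series
(intended for series with zero constant coefficient, where it computes `F(a 0, a 1, ...)`). -/
def msubst {σ τ : Type} [Fintype σ] [DecidableEq σ] (F : MvPowerSeries σ R)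
    (a : σ → MvPowerSeries τ R) : MvPowerSeries τ R :=
  fun d => MvPowerSeries.coeff d
    (∑ e ∈ Finset.Iic (Finsupp.equivFunOnFinite.symm fun _ => d.sum fun _ n => n),
      MvPowerSeries.coeff e F • ∏ i, a i ^ e i)

/-- Substitution of the single variable of a one-variable power series: `f(a)`. -/
def psubst {τ : Type} (f : PowerSeries R) (a : MvPowerSeries τ R) : MvPowerSeries τ R :=
  msubst f (fun _ => a)

/-- Composition of one-variable power series, `pcomp f g = f(g(X))`. -/
def pcomp (f g : PowerSeries R) : PowerSeries R := psubst f g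

/-- `f(F(X,Y)) = G(f(X), f(Y))` : `f` is a homomorphism of formal group laws `F → G`. -/
def IsFGLHom (F G : MvPowerSeries (Fin 2) R) (f : PowerSeries R) : Prop :=
  psubst f F = msubst G
    ![psubst f (MvPowerSeries.X 0 : MvPowerSeries (Fin 2) R),
      psubst f (MvPowerSeries.X 1 : MvPowerSeries (Fin 2) R)]

/-- `F` is a commutative one-dimensional formal group law:
`F(X,0) = X`, `F(0,Y) = Y`, `F(F(X,Y),Z) = F(X,F(Y,Z))` and `F(X,Y) = F(Y,X)`. -/
def IsFGL (F : MvPowerSeries (Fin 2) R) : Prop :=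
  msubst F ![(MvPowerSeries.X 0 : MvPowerSeries (Fin 2) R), 0] = MvPowerSeries.X 0 ∧
  msubst F ![(0 : MvPowerSeries (Fin 2) R), MvPowerSeries.X 1] = MvPowerSeries.X 1 ∧
  msubst F ![msubst F ![(MvPowerSeries.X 0 : MvPowerSeries (Fin 3) R),
      MvPowerSeries.X 1], MvPowerSeries.X 2]
    = msubst F ![(MvPowerSeries.X 0 : MvPowerSeries (Fin 3) R),
        msubst F ![(MvPowerSeries.X 1 : MvPowerSeries (Fin 3) R), MvPowerSeries.X 2]] ∧
  msubst F ![(MvPowerSeries.X 1 : MvPowerSeries (Fin 2) R), MvPowerSeries.X 0] = F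

/-- the additive formal group law `X + Y` -/
def addFGL : MvPowerSeries (Fin 2) R := MvPowerSeries.X 0 + MvPowerSeries.X 1

/-- `f(X+Y) = f(X) + f(Y)` as two-variable power series. -/
def IsAdditive (f : PowerSeries R) : Prop :=
  psubst f (MvPowerSeries.X 0 + MvPowerSeries.X 1 : MvPowerSeries (Fin 2) R)
    = psubst f (MvPowerSeries.X 0 : MvPowerSeries (Fin 2) R)
      + psubst f (MvPowerSeries.X 1 : MvPowerSeries (Fin 2) R)

-- number theory helpers
lemma odd_choose_pow (a : ℕ) : ∀ n : ℕ, 2 ^ a ≤ n → n < 2 ^ (a + 1) →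
    n.choose (2 ^ a) % 2 = 1 := by
  induction a with
  | zero => intro n h1 h2; interval_cases n; simp
  | succ a ih =>
    intro n h1 h2
    haveI : Fact (Nat.Prime 2) := ⟨Nat.prime_two⟩
    have L := @Choose.choose_modEq_choose_mod_mul_choose_div_nat n (2 ^ (a + 1)) 2 _
    have e1 : 2 ^ (a + 1) % 2 = 0 := by
      simp [pow_succ, Nat.mul_mod_left]
    have e2 : 2 ^ (a + 1) / 2 = 2 ^ a := by
      rw [pow_succ, Nat.mul_div_cancel]; norm_num
    rw [e1, e2, Nat.choose_zero_right, one_mul] at L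
    have h3 : 2 ^ a ≤ n / 2 := by
      rw [Nat.le_div_iff_mul_le (by norm_num)]
      calc 2 ^ a * 2 = 2 ^ (a + 1) := by ring
      _ ≤ n := h1
    have h4 : n / 2 < 2 ^ (a + 1) := by
      rw [Nat.div_lt_iff_lt_mul (by norm_num)]
      calc n < 2 ^ (a + 1 + 1) := h2
      _ = 2 ^ (a + 1) * 2 := by ring
    have := ih (n / 2) h3 h4
    unfold Nat.ModEq at L
    omega

lemma exists_odd_choose (n : ℕ) (hn : 0 < n) (h : ∀ i : ℕ, n ≠ 2 ^ i) :
    ∃ k, 0 < k ∧ k < n ∧ n.choose k % 2 = 1 := by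
  refine ⟨2 ^ (Nat.log 2 n), Nat.pow_pos (by norm_num), ?_, ?_⟩
  · exact lt_of_le_of_ne (Nat.pow_log_le_self 2 hn.ne') (Ne.symm (h _))
  · exact odd_choose_pow _ n (Nat.pow_log_le_self 2 hn.ne')
      (Nat.lt_pow_succ_log_self (by norm_num) n)

lemma cast_odd_char2 {R : Type} [CommRing R] [CharP R 2] {c : ℕ} (h : c % 2 = 1) :
    (c : R) = 1 := by
  have : c = 2 * (c / 2) + 1 := by omega
  rw [this]; push_cast; have h2 : (2 : R) = 0 := by exact_mod_cast CharP.cast_eq_zero R 2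
  rw [h2]; ring

lemma cast_even_char2 {R : Type} [CommRing R] [CharP R 2] {c : ℕ} (h : 2 ∣ c) :
    (c : R) = 0 := by
  obtain ⟨m, rfl⟩ := h
  push_cast; have h2 : (2 : R) = 0 := by exact_mod_cast CharP.cast_eq_zero R 2
  rw [h2]; ring
section Helpers
open MvPowerSeries Finsupp


lemma dsum2 (d : Fin 2 →₀ ℕ) : (d.sum fun _ n => n) = d 0 + d 1 := by
  rw [Finsupp.sum_fintype _ _ (fun _ => rfl)]
  exact Fin.sum_univ_two _

lemma eq_single_add_single (d : Fin 2 →₀ ℕ) (k m : ℕ) :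
    d = Finsupp.single 0 k + Finsupp.single 1 m ↔ d 0 = k ∧ d 1 = m := by
  rw [Finsupp.ext_iff, Fin.forall_fin_two]
  simp [Finsupp.single_apply]

lemma eq_single0 (d : Fin 2 →₀ ℕ) (k : ℕ) :
    d = Finsupp.single 0 k ↔ d 0 = k ∧ d 1 = 0 := by
  rw [Finsupp.ext_iff, Fin.forall_fin_two]
  simp [Finsupp.single_apply]

lemma eq_single1 (d : Fin 2 →₀ ℕ) (k : ℕ) :
    d = Finsupp.single 1 k ↔ d 0 = 0 ∧ d 1 = k := by
  rw [Finsupp.ext_iff, Fin.forall_fin_two]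
  simp [Finsupp.single_apply]

lemma coeff_psubst (f : PowerSeries R) (a : MvPowerSeries (Fin 2) R) (d : Fin 2 →₀ ℕ) :
    MvPowerSeries.coeff d (psubst f a)
      = ∑ n ∈ Finset.range (d 0 + d 1 + 1),
          PowerSeries.coeff n f * MvPowerSeries.coeff d (a ^ n) := by
  have : MvPowerSeries.coeff d (psubst f a)
      = MvPowerSeries.coeff d
        (∑ e ∈ Finset.Iic (Finsupp.equivFunOnFinite.symm fun _ => d.sum fun _ n => n),
          MvPowerSeries.coeff e f • ∏ i : Unit, a ^ e i) := rfl
  rw [this, map_sum]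
  refine Finset.sum_nbij' (fun e => e ()) (fun n => Finsupp.single () n) ?_ ?_ ?_ ?_ ?_
  · intro e he
    rw [Finset.mem_Iic] at he
    have := he ()
    simp [dsum2] at this ⊢
    omega
  · intro n hn
    rw [Finset.mem_range] at hn
    rw [Finset.mem_Iic]
    intro u
    simp [dsum2]
    omega
  · intro e he
    ext
    simp [Finsupp.single_apply]
  · intro n hn
    simp
  · intro e he
    rw [map_smul, smul_eq_mul]
    congr 1
    · conv_lhs => rw [Finsupp.unique_single e]
      rfl
    · rw [Fintype.prod_unique]

lemma coeff_add_pow' (n : ℕ) (d : Fin 2 →₀ ℕ) :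
    MvPowerSeries.coeff d ((X 0 + X 1 : MvPowerSeries (Fin 2) R) ^ n)
      = if d 0 + d 1 = n then (n.choose (d 0) : R) else 0 := by
  rw [add_pow, map_sum]
  have hterm : ∀ k, MvPowerSeries.coeff d
      ((X 0 : MvPowerSeries (Fin 2) R) ^ k * X 1 ^ (n - k) * (n.choose k : MvPowerSeries (Fin 2) R))
      = if d 0 = k ∧ d 1 = n - k then (n.choose k : R) else 0 := by
    intro k
    rw [X_pow_eq, X_pow_eq, monomial_mul_monomial, ← nsmul_eq_mul', map_nsmul,
      coeff_monomial]
    by_cases h : d 0 = k ∧ d 1 = n - k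
    · rw [if_pos ((eq_single_add_single d k (n - k)).mpr h), if_pos h]; simp
    · rw [if_neg (fun hh => h ((eq_single_add_single d k (n - k)).mp hh)), if_neg h]; simp
  rw [Finset.sum_congr rfl (fun k _ => hterm k)]
  rw [Finset.sum_eq_single (d 0)]
  · split_ifs with h1 h2 h2
    · rfl
    · have hlt : n < d 0 := by omega
      rw [Nat.choose_eq_zero_of_lt hlt, Nat.cast_zero]
    · exact absurd ⟨rfl, by omega⟩ h1
    · rfl
  · intro k _ hne
    rw [if_neg]
    rintro ⟨h, -⟩
    exact hne h.symm
  · intro hb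
    rw [Finset.mem_range] at hb
    split_ifs with h1
    · have hlt : n < d 0 := by omega
      rw [Nat.choose_eq_zero_of_lt hlt, Nat.cast_zero]
    · rfl


lemma coeff_psubst_X0 (f : PowerSeries R) (d : Fin 2 →₀ ℕ) :
    MvPowerSeries.coeff d (psubst f (X 0 : MvPowerSeries (Fin 2) R))
      = if d 1 = 0 then PowerSeries.coeff (d 0) f else 0 := by
  rw [coeff_psubst]
  rw [Finset.sum_eq_single (d 0)]
  · rw [coeff_X_pow]
    by_cases h : d 1 = 0
    · rw [if_pos ((eq_single0 d (d 0)).mpr ⟨rfl, h⟩), if_pos h, mul_one]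
    · rw [if_neg (fun hh => h ((eq_single0 d (d 0)).mp hh).2), if_neg h, mul_zero]
  · intro k _ hne
    rw [coeff_X_pow, if_neg (fun hh => hne ((eq_single0 d k).mp hh).1.symm), mul_zero]
  · intro hb
    exact absurd (Finset.mem_range.mpr (by omega)) hb

lemma coeff_psubst_X1 (f : PowerSeries R) (d : Fin 2 →₀ ℕ) :
    MvPowerSeries.coeff d (psubst f (X 1 : MvPowerSeries (Fin 2) R))
      = if d 0 = 0 then PowerSeries.coeff (d 1) f else 0 := by
  rw [coeff_psubst]
  rw [Finset.sum_eq_single (d 1)]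
  · rw [coeff_X_pow]
    by_cases h : d 0 = 0
    · rw [if_pos ((eq_single1 d (d 1)).mpr ⟨h, rfl⟩), if_pos h, mul_one]
    · rw [if_neg (fun hh => h ((eq_single1 d (d 1)).mp hh).1), if_neg h, mul_zero]
  · intro k _ hne
    rw [coeff_X_pow, if_neg (fun hh => hne ((eq_single1 d k).mp hh).2.symm), mul_zero]
  · intro hb
    exact absurd (Finset.mem_range.mpr (by omega)) hb

lemma coeff_psubst_add (f : PowerSeries R) (d : Fin 2 →₀ ℕ) :
    MvPowerSeries.coeff d (psubst f (X 0 + X 1 : MvPowerSeries (Fin 2) R))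
      = ((d 0 + d 1).choose (d 0) : R) * PowerSeries.coeff (d 0 + d 1) f := by
  rw [coeff_psubst]
  rw [Finset.sum_eq_single (d 0 + d 1)]
  · rw [coeff_add_pow', if_pos rfl, mul_comm]
  · intro k _ hne
    rw [coeff_add_pow', if_neg (fun hh => hne hh.symm), mul_zero]
  · intro hb
    exact absurd (Finset.mem_range.mpr (by omega)) hb

end Helpers

/-- over a ring of characteristic 2, a power series with zero constant term
satisfies `f(X+Y) = f(X)+f(Y)` iff it is supported on exponents that are powers of `2`. -/
theorem stmt7 (R : Type) [CommRing R] [CharP R 2] (f : PowerSeries R)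
    (hf0 : PowerSeries.constantCoeff f = 0) :
    IsAdditive f ↔ ∀ n : ℕ, (∀ i : ℕ, n ≠ 2 ^ i) → PowerSeries.coeff n f = 0 := by
  constructor
  · intro h n hn
    by_cases hn0 : n = 0
    · subst hn0
      rw [PowerSeries.coeff_zero_eq_constantCoeff_apply]
      exact hf0
    · obtain ⟨k, hk0, hkn, hodd⟩ := exists_odd_choose n (Nat.pos_of_ne_zero hn0) hn
      set d : Fin 2 →₀ ℕ := Finsupp.single 0 k + Finsupp.single 1 (n - k) with hd
      have hd0 : d 0 = k := by simp [hd, Finsupp.single_apply]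
      have hd1 : d 1 = n - k := by simp [hd, Finsupp.single_apply]
      have H := congrArg (MvPowerSeries.coeff d) h
      rw [map_add, coeff_psubst_add, coeff_psubst_X0, coeff_psubst_X1, hd0, hd1,
        if_neg (by omega), if_neg (by omega)] at H
      have hkk : k + (n - k) = n := by omega
      rw [hkk, cast_odd_char2 hodd, one_mul, add_zero] at H
      exact H
  · intro h
    have hf0' : PowerSeries.coeff 0 f = 0 := by
      rw [PowerSeries.coeff_zero_eq_constantCoeff_apply]; exact hf0
    apply MvPowerSeries.ext
    intro d
    rw [map_add, coeff_psubst_add, coeff_psubst_X0, coeff_psubst_X1]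
    by_cases h0 : d 0 = 0 <;> by_cases h1 : d 1 = 0
    · simp [h0, h1, hf0']
    · simp [h0, h1]
    · simp [h0, h1]
    · rw [if_neg h1, if_neg h0, add_zero]
      by_cases hp : ∃ a, d 0 + d 1 = 2 ^ a
      · obtain ⟨a, ha⟩ := hp
        rw [ha]
        have hdvd : 2 ∣ (2 ^ a).choose (d 0) :=
          Nat.Prime.dvd_choose_pow Nat.prime_two h0 (by omega)
        rw [cast_even_char2 hdvd, zero_mul]
      · push_neg at hp
        rw [h (d 0 + d 1) hp, mul_zero]
end
end

section
/- Let R be a commutative ring of characteristic 2 and let f(X) = ∑_{i≥0} a_i X^{2^i} ∈ R[[X]] with a_0 = 1. Then f has a compositional inverse g which is also of the form g(X) = ∑_{j≥0} b_j X^{2^j} with b_0 = 1. -/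
noncomputable section

variable {R : Type} [CommRing R]

lemma coeff_pcomp (f g : PowerSeries R) (n : ℕ) :
    PowerSeries.coeff n (pcomp f g) =
      ∑ k ∈ Finset.range (n + 1), PowerSeries.coeff k f * PowerSeries.coeff n (g ^ k) := by
  have h1 : PowerSeries.coeff n (pcomp f g) = MvPowerSeries.coeff (Finsupp.single () n)
      (∑ e ∈ Finset.Iic (Finsupp.equivFunOnFinite.symm fun _ =>
          (Finsupp.single () n).sum fun _ m => m),
        MvPowerSeries.coeff e f • ∏ i, g ^ e i) := rfl
  have hsum : ((Finsupp.single () n).sum fun _ m => m) = n := by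
    simp
  rw [h1, map_sum]
  refine Finset.sum_nbij' (fun e => e ()) (fun k => Finsupp.single () k) ?_ ?_ ?_ ?_ ?_
  · intro e he
    simp only [Finset.mem_Iic, Finsupp.le_def, hsum] at he
    have := he ()
    simp only [Finsupp.coe_equivFunOnFinite_symm] at this
    simp only [Finset.mem_range]
    omega
  · intro k hk
    simp only [Finset.mem_range] at hk
    simp only [Finset.mem_Iic, Finsupp.le_def, hsum]
    intro i
    simp only [Finsupp.coe_equivFunOnFinite_symm, Finsupp.single_apply]
    cases i; simp; omega
  · intro e he
    exact (Finsupp.unique_single e).symm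
  · intro k hk
    simp
  · intro e he
    have he' : e = Finsupp.single () (e ()) := Finsupp.unique_single e
    rw [map_smul, smul_eq_mul]
    congr 1
    · rw [he']; simp [PowerSeries.coeff]
    · rw [show (∏ i, g ^ e i) = g ^ e () from by simp]
      simp [PowerSeries.coeff]

section CharTwo
variable [CharP R 2]

lemma sq_add (x y : R) : (x + y) ^ 2 = x ^ 2 + y ^ 2 := by
  rw [add_sq]
  have : 2 * x * y = 0 := by
    rw [show (2 : R) = ((2 : ℕ) : R) from by norm_num, CharP.cast_eq_zero R 2]
    ring
  rw [this]; ring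

lemma frob_add (i : ℕ) (x y : R) : (x + y) ^ 2 ^ i = x ^ 2 ^ i + y ^ 2 ^ i := by
  induction i with
  | zero => simp
  | succ i ih =>
    rw [pow_succ, pow_mul, pow_mul, pow_mul, ih, sq_add]

lemma frob_sum {α : Type} (s : Finset α) (f : α → R) (i : ℕ) :
    (∑ x ∈ s, f x) ^ 2 ^ i = ∑ x ∈ s, f x ^ 2 ^ i := by
  classical
  induction s using Finset.induction with
  | empty => simp [zero_pow (Nat.two_pow_pos i).ne']
  | insert x s hx ih => rw [Finset.sum_insert hx, Finset.sum_insert hx, frob_add, ih]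

lemma coeff_sq_even (h : PowerSeries R) (n : ℕ) :
    PowerSeries.coeff (2 * n) (h ^ 2) = (PowerSeries.coeff n h) ^ 2 := by
  rw [pow_two, PowerSeries.coeff_mul]
  have hmem : ((n, n) : ℕ × ℕ) ∈ Finset.HasAntidiagonal.antidiagonal (2 * n) := by
    simp [Finset.HasAntidiagonal.mem_antidiagonal]; ring
  rw [← Finset.add_sum_erase _ _ hmem]
  have : ∑ p ∈ (Finset.HasAntidiagonal.antidiagonal (2 * n)).erase (n, n),
      PowerSeries.coeff p.1 h * PowerSeries.coeff p.2 h = 0 := by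
    refine Finset.sum_involution (fun p _ => (p.2, p.1)) ?_ ?_ ?_ ?_
    · intro p _
      rw [mul_comm]; exact CharTwo.add_self_eq_zero _
    · intro p hp _
      simp only [Finset.mem_erase, Finset.HasAntidiagonal.mem_antidiagonal] at hp
      intro hc
      apply hp.1
      have : p.2 = p.1 := congrArg Prod.fst hc
      obtain ⟨a, b⟩ := p
      simp only [Prod.mk.injEq] at hc ⊢
      omega
    · intro p hp
      simp only [Finset.mem_erase, Finset.HasAntidiagonal.mem_antidiagonal] at hp ⊢
      constructor
      · intro hc
        apply hp.1
        obtain ⟨a, b⟩ := p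
        simp only [Prod.mk.injEq] at hc ⊢
        omega
      · omega
    · intro p _; rfl
  rw [this, add_zero, pow_two]

lemma coeff_sq_odd (h : PowerSeries R) (n : ℕ) (hn : ¬ 2 ∣ n) :
    PowerSeries.coeff n (h ^ 2) = 0 := by
  rw [pow_two, PowerSeries.coeff_mul]
  refine Finset.sum_involution (fun p _ => (p.2, p.1)) ?_ ?_ ?_ ?_
  · intro p _
    rw [mul_comm]; exact CharTwo.add_self_eq_zero _
  · intro p hp _
    simp only [Finset.HasAntidiagonal.mem_antidiagonal] at hp
    intro hc
    have : p.2 = p.1 := congrArg Prod.fst hc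
    omega
  · intro p hp
    simp only [Finset.HasAntidiagonal.mem_antidiagonal] at hp ⊢
    omega
  · intro p _; rfl

end CharTwo

/-- the power series `∑ c j X^(2^j)` -/
def pow2series (c : ℕ → R) : PowerSeries R :=
  PowerSeries.mk fun n => if n = 2 ^ Nat.log 2 n then c (Nat.log 2 n) else 0

lemma coeff_pow2series_pow (c : ℕ → R) (j : ℕ) :
    PowerSeries.coeff (2 ^ j) (pow2series c) = c j := by
  rw [pow2series, PowerSeries.coeff_mk, Nat.log_pow (by norm_num)]
  simp

lemma coeff_pow2series_ne (c : ℕ → R) (n : ℕ) (hn : ∀ i : ℕ, n ≠ 2 ^ i) :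
    PowerSeries.coeff n (pow2series c) = 0 := by
  rw [pow2series, PowerSeries.coeff_mk, if_neg (hn _)]

lemma pow2series_eq (f : PowerSeries R) (hfs : ∀ n : ℕ, (∀ i : ℕ, n ≠ 2 ^ i) →
    PowerSeries.coeff n f = 0) :
    f = pow2series (fun i => PowerSeries.coeff (2 ^ i) f) := by
  ext n
  by_cases h : ∀ i : ℕ, n ≠ 2 ^ i
  · rw [coeff_pow2series_ne _ _ h, hfs n h]
  · push_neg at h
    obtain ⟨i, rfl⟩ := h
    rw [coeff_pow2series_pow]

section CharTwo
variable [CharP R 2]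

lemma pow2series_sq (c : ℕ → R) :
    (pow2series c) ^ 2 = pow2series (fun m => if 1 ≤ m then (c (m - 1)) ^ 2 else 0) := by
  ext n
  by_cases h2 : 2 ∣ n
  · obtain ⟨m, rfl⟩ := h2
    rw [coeff_sq_even]
    by_cases hm : ∀ i : ℕ, m ≠ 2 ^ i
    · rw [coeff_pow2series_ne _ _ hm, coeff_pow2series_ne]
      · ring
      · intro i hi
        cases i with
        | zero => norm_num at hi
        | succ i => exact hm i (by rw [pow_succ] at hi; omega)
    · push_neg at hm
      obtain ⟨i, rfl⟩ := hm
      rw [coeff_pow2series_pow, show 2 * 2 ^ i = 2 ^ (i + 1) from by ring,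
        coeff_pow2series_pow]
      simp
  · rcases eq_or_ne n 1 with rfl | hn1
    · rw [coeff_sq_odd _ _ h2, show (1:ℕ) = 2 ^ 0 from rfl, coeff_pow2series_pow]
      simp
    · rw [coeff_sq_odd _ _ h2, coeff_pow2series_ne]
      intro i hi
      cases i with
      | zero => norm_num at hi; omega
      | succ i => rw [pow_succ] at hi; omega

lemma pow2series_two_pow (c : ℕ → R) (k : ℕ) :
    (pow2series c) ^ 2 ^ k
      = pow2series (fun m => if k ≤ m then (c (m - k)) ^ 2 ^ k else 0) := by
  induction k with
  | zero => simp [pow2series]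
  | succ k ih =>
    rw [pow_succ, pow_mul, ih, pow2series_sq]
    refine congrArg pow2series (funext fun m => ?_)
    rcases Nat.lt_or_ge m (k + 1) with h | h
    · rw [if_neg (show ¬ k + 1 ≤ m by omega)]
      rcases Nat.lt_or_ge m 1 with h1 | h1
      · rw [if_neg (show ¬ 1 ≤ m by omega)]
      · rw [if_pos h1, if_neg (show ¬ k ≤ m - 1 by omega), zero_pow (by norm_num)]
    · rw [if_pos (show 1 ≤ m by omega), if_pos (show k ≤ m - 1 by omega),
        if_pos h, show m - 1 - k = m - (k + 1) from by omega, ← pow_mul]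

end CharTwo

/-- twisted multiplication of coefficient sequences -/
def starC (a b : ℕ → R) : ℕ → R :=
  fun m => ∑ i ∈ Finset.range (m + 1), a i * (b (m - i)) ^ 2 ^ i

section CharTwo
variable [CharP R 2]

lemma pcomp_pow2series (a b : ℕ → R) :
    pcomp (pow2series a) (pow2series b) = pow2series (starC a b) := by
  ext n
  rw [coeff_pcomp]
  by_cases hn : ∀ i : ℕ, n ≠ 2 ^ i
  · rw [coeff_pow2series_ne _ _ hn]
    refine Finset.sum_eq_zero fun k _ => ?_
    by_cases hk : k = 2 ^ Nat.log 2 k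
    · rw [hk, pow2series_two_pow, coeff_pow2series_ne _ _ hn, mul_zero]
    · rw [coeff_pow2series_ne _ k (fun i hi => hk (by rw [hi, Nat.log_pow (by norm_num)])),
        zero_mul]
  · push_neg at hn
    obtain ⟨m, rfl⟩ := hn
    rw [coeff_pow2series_pow]
    have hsub : (Finset.range (m + 1)).image (fun i => 2 ^ i) ⊆ Finset.range (2 ^ m + 1) := by
      intro k hk
      simp only [Finset.mem_image, Finset.mem_range] at hk ⊢
      obtain ⟨i, hi, rfl⟩ := hk
      have := Nat.pow_le_pow_right (show 1 ≤ 2 by norm_num) (show i ≤ m by omega)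
      omega
    rw [← Finset.sum_subset hsub]
    · rw [Finset.sum_image (fun i _ j _ h => Nat.pow_right_injective (by norm_num) h)]
      rw [starC]
      refine Finset.sum_congr rfl fun i hi => ?_
      simp only [Finset.mem_range] at hi
      rw [coeff_pow2series_pow, pow2series_two_pow, coeff_pow2series_pow,
        if_pos (show i ≤ m by omega)]
    · intro k hk hknot
      by_cases hk2 : k = 2 ^ Nat.log 2 k
      · exfalso
        apply hknot
        simp only [Finset.mem_range] at hk
        simp only [Finset.mem_image, Finset.mem_range]
        refine ⟨Nat.log 2 k, ?_, hk2.symm⟩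
        have : 2 ^ Nat.log 2 k ≤ 2 ^ m := by omega
        have := (Nat.pow_le_pow_iff_right (show 1 < 2 by norm_num)).mp this
        omega
      · rw [coeff_pow2series_ne _ k (fun i hi => hk2 (by rw [hi, Nat.log_pow (by norm_num)])),
          zero_mul]

end CharTwo

lemma pow2series_delta : pow2series (fun m => if m = 0 then (1 : R) else 0) = PowerSeries.X := by
  ext n
  rw [PowerSeries.coeff_X]
  by_cases hn : ∀ i : ℕ, n ≠ 2 ^ i
  · rw [coeff_pow2series_ne _ _ hn, if_neg (show ¬ n = 1 by simpa using hn 0)]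
  · push_neg at hn
    obtain ⟨i, rfl⟩ := hn
    rw [coeff_pow2series_pow]
    cases i with
    | zero => simp
    | succ i =>
      have h2 : 1 < 2 ^ (i + 1) := Nat.one_lt_two_pow (by omega)
      rw [if_neg (show ¬ i + 1 = 0 by omega), if_neg (show ¬ 2 ^ (i + 1) = 1 by omega)]

lemma starC_one_left (a : ℕ → R) : starC (fun m => if m = 0 then (1 : R) else 0) a = a := by
  funext m
  rw [starC]
  rw [Finset.sum_eq_single 0]
  · simp
  · intro i _ hi
    rw [if_neg hi, zero_mul]
  · intro h
    simp at h

lemma starC_one_right (a : ℕ → R) : starC a (fun m => if m = 0 then (1 : R) else 0) = a := by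
  funext m
  rw [starC]
  rw [Finset.sum_eq_single m]
  · simp
  · intro i hi him
    simp only [Finset.mem_range] at hi
    rw [if_neg (show m - i ≠ 0 by omega), zero_pow (Nat.two_pow_pos i).ne', mul_zero]
  · intro h
    simp at h

section CharTwo
variable [CharP R 2]

lemma starC_assoc (a b c : ℕ → R) : starC (starC a b) c = starC a (starC b c) := by
  funext m
  rw [starC, starC]
  have hL : ∀ p ∈ Finset.range (m + 1), starC a b p * (c (m - p)) ^ 2 ^ p
      = ∑ i ∈ Finset.range (p + 1), a i * (b (p - i)) ^ 2 ^ i * (c (m - p)) ^ 2 ^ p := by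
    intro p _
    rw [starC, Finset.sum_mul]
  have hR : ∀ i ∈ Finset.range (m + 1), a i * (starC b c (m - i)) ^ 2 ^ i
      = ∑ j ∈ Finset.range (m - i + 1),
          a i * (b j) ^ 2 ^ i * (c (m - i - j)) ^ 2 ^ (i + j) := by
    intro i _
    rw [starC, frob_sum, Finset.mul_sum]
    refine Finset.sum_congr rfl fun j _ => ?_
    rw [mul_pow, ← pow_mul, pow_add]
    ring
  rw [Finset.sum_congr rfl hL, Finset.sum_congr rfl hR, Finset.sum_sigma', Finset.sum_sigma']
  refine Finset.sum_nbij' (fun x => ⟨x.2, x.1 - x.2⟩) (fun y => ⟨y.1 + y.2, y.1⟩) ?_ ?_ ?_ ?_ ?_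
  · rintro ⟨p, i⟩ hx
    simp only [Finset.mem_sigma, Finset.mem_range] at hx ⊢
    omega
  · rintro ⟨i, j⟩ hy
    simp only [Finset.mem_sigma, Finset.mem_range] at hy ⊢
    omega
  · rintro ⟨p, i⟩ hx
    simp only [Finset.mem_sigma, Finset.mem_range] at hx
    show (⟨i + (p - i), i⟩ : (_ : ℕ) × ℕ) = ⟨p, i⟩
    rw [show i + (p - i) = p from by omega]
  · rintro ⟨i, j⟩ hy
    simp only [Finset.mem_sigma, Finset.mem_range] at hy
    show (⟨i, i + j - i⟩ : (_ : ℕ) × ℕ) = ⟨i, j⟩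
    rw [show i + j - i = j from by omega]
  · rintro ⟨p, i⟩ hx
    simp only [Finset.mem_sigma, Finset.mem_range] at hx
    have h1 : i + (p - i) = p := by omega
    have h2 : m - i - (p - i) = m - p := by omega
    simp only [h1, h2]

/-- right inverse coefficient sequence -/
def rinv (a : ℕ → R) : ℕ → R
  | 0 => 1
  | (m + 1) => -∑ i ∈ Finset.range (m + 1), a (i + 1) * (rinv a (m - i)) ^ 2 ^ (i + 1)
  decreasing_by exact Nat.lt_succ_of_le (Nat.sub_le m i)

/-- left inverse coefficient sequence -/
def linv (a : ℕ → R) : ℕ → R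
  | 0 => 1
  | (m + 1) => -∑ i ∈ Finset.range (m + 1), linv a (m - i) * (a (m + 1 - (m - i))) ^ 2 ^ (m - i)
  decreasing_by exact Nat.lt_succ_of_le (Nat.sub_le m i)

lemma starC_rinv (a : ℕ → R) (ha : a 0 = 1) :
    starC a (rinv a) = fun m => if m = 0 then (1 : R) else 0 := by
  funext m
  cases m with
  | zero => simp [starC, ha, rinv]
  | succ m =>
    rw [starC, if_neg (Nat.succ_ne_zero m), Finset.sum_range_succ']
    simp only [ha, Nat.sub_zero, pow_zero, pow_one, one_mul]
    rw [rinv]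
    have : ∀ i ∈ Finset.range (m + 1),
        a (i + 1) * (rinv a (m + 1 - (i + 1))) ^ 2 ^ (i + 1)
          = a (i + 1) * (rinv a (m - i)) ^ 2 ^ (i + 1) := by
      intro i _
      rw [show m + 1 - (i + 1) = m - i from by omega]
    rw [Finset.sum_congr rfl this]
    ring

omit [CharP R 2] in
lemma linv_starC (a : ℕ → R) (ha : a 0 = 1) :
    starC (linv a) a = fun m => if m = 0 then (1 : R) else 0 := by
  funext m
  cases m with
  | zero => simp [starC, ha, linv]
  | succ m =>
    rw [starC, if_neg (Nat.succ_ne_zero m), Finset.sum_range_succ]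
    simp only [Nat.sub_self, ha, one_pow, mul_one]
    rw [show linv a (m + 1) = -∑ i ∈ Finset.range (m + 1),
        linv a (m - i) * (a (m + 1 - (m - i))) ^ 2 ^ (m - i) from by rw [linv]]
    rw [← Finset.sum_range_reflect (fun i => linv a i * (a (m + 1 - i)) ^ 2 ^ i) (m + 1)]
    simp only [Nat.add_sub_cancel]
    ring

lemma linv_eq_rinv (a : ℕ → R) (ha : a 0 = 1) : linv a = rinv a := by
  have h1 := starC_one_right (R := R) (linv a)
  rw [← starC_rinv a ha, ← starC_assoc, linv_starC a ha, starC_one_left] at h1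
  exact h1.symm

end CharTwo


/-- over a ring of characteristic 2, a power series `f = ∑ aᵢ X^(2^i)` with
`a₀ = 1` has a compositional inverse of the same form `g = ∑ bⱼ X^(2^j)` with `b₀ = 1`. -/
theorem stmt9 (R : Type) [CommRing R] [CharP R 2] (f : PowerSeries R)
    (hf1 : PowerSeries.coeff 1 f = 1)
    (hfs : ∀ n : ℕ, (∀ i : ℕ, n ≠ 2 ^ i) → PowerSeries.coeff n f = 0) :
    ∃ g : PowerSeries R, pcomp f g = PowerSeries.X ∧ pcomp g f = PowerSeries.X ∧
      PowerSeries.coeff 1 g = 1 ∧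
      ∀ n : ℕ, (∀ i : ℕ, n ≠ 2 ^ i) → PowerSeries.coeff n g = 0 := by
  set a : ℕ → R := fun i => PowerSeries.coeff (2 ^ i) f with ha
  have ha0 : a 0 = 1 := by simpa [ha] using hf1
  have hf : f = pow2series a := pow2series_eq f hfs
  refine ⟨pow2series (rinv a), ?_, ?_, ?_, ?_⟩
  · rw [hf, pcomp_pow2series, starC_rinv a ha0, pow2series_delta]
  · rw [hf, pcomp_pow2series, ← linv_eq_rinv a ha0, linv_starC a ha0, pow2series_delta]
  · have := coeff_pow2series_pow (rinv a) 0
    rw [show rinv a 0 = 1 from by rw [rinv]] at this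
    simpa using this
  · exact fun n hn => coeff_pow2series_ne _ n hn
end
end

section
/- Over the polynomial ring A = F_2[ξ_1, ξ_2, …], the universal strict automorphism ξ(X) = X + ξ_1 X^2 + ξ_2 X^4 + ⋯ of the additive formal group law induces, via precomposition at the level of the corepresenting object, a comultiplication Δ: A → A ⊗ A given by Δ(ξ_k) = ∑_{i+j=k} ξ_j^{2^i} ⊗ ξ_i (with ξ_0 = 1), and this makes A into a Hopf algebra over F_2. -/
noncomputable section

variable {R : Type} [CommRing R]

/-- `ξ 0 = 1` and `ξ k` is the `k`-th polynomial generator for `k ≥ 1`. -/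
def xi (k : ℕ) : MvPolynomial ℕ (ZMod 2) :=
  if k = 0 then 1 else MvPolynomial.X (k - 1)

namespace Stmt16aux
open Finset TensorProduct

noncomputable abbrev Am := MvPolynomial ℕ (ZMod 2)

example : CharP Am 2 := inferInstance
example : Fact (Nat.Prime 2) := inferInstance

lemma sum_ad_assoc {M : Type*} [AddCommMonoid M] (k : ℕ) (f : ℕ → ℕ → ℕ → M) :
    ∑ p ∈ antidiagonal k, ∑ q ∈ antidiagonal p.2, f p.1 q.1 q.2
      = ∑ p ∈ antidiagonal k, ∑ q ∈ antidiagonal p.1, f q.1 q.2 p.2 := by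
  rw [Finset.sum_sigma', Finset.sum_sigma']
  refine Finset.sum_nbij' (fun x => ⟨(x.1.1 + x.2.1, x.2.2), (x.1.1, x.2.1)⟩)
    (fun y => ⟨(y.2.1, y.2.2 + y.1.2), (y.2.2, y.1.2)⟩) ?_ ?_ ?_ ?_ ?_
  · rintro ⟨⟨i, j⟩, ⟨a, b⟩⟩ hx
    simp only [Finset.mem_sigma, Finset.HasAntidiagonal.mem_antidiagonal] at hx ⊢
    exact ⟨by omega, trivial⟩
  · rintro ⟨⟨m, b⟩, ⟨i, a⟩⟩ hy
    simp only [Finset.mem_sigma, Finset.HasAntidiagonal.mem_antidiagonal] at hy ⊢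
    exact ⟨by omega, trivial⟩
  · rintro ⟨⟨i, j⟩, ⟨a, b⟩⟩ hx
    simp only [Finset.mem_sigma, Finset.HasAntidiagonal.mem_antidiagonal] at hx
    show (⟨(i, a + b), (a, b)⟩ : (_ : ℕ × ℕ) × ℕ × ℕ) = ⟨(i, j), (a, b)⟩
    rw [hx.2]
  · rintro ⟨⟨m, b⟩, ⟨i, a⟩⟩ hy
    simp only [Finset.mem_sigma, Finset.HasAntidiagonal.mem_antidiagonal] at hy
    show (⟨(i + a, b), (i, a)⟩ : (_ : ℕ × ℕ) × ℕ × ℕ) = ⟨(m, b), (i, a)⟩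
    rw [hy.2]
  · rintro ⟨⟨i, j⟩, ⟨a, b⟩⟩ hx; rfl


lemma xi_zero : xi 0 = 1 := rfl
lemma xi_succ (n : ℕ) : xi (n+1) = MvPolynomial.X n := rfl

noncomputable def sxi : ℕ → Am
  | 0 => 1
  | (k+1) => ∑ i ∈ (Finset.range (k+1)).attach,
      (xi (k+1 - (i : ℕ))) ^ (2 ^ (i : ℕ)) * sxi i
  decreasing_by exact Finset.mem_range.mp i.2

lemma sxi_zero : sxi 0 = 1 := by rw [sxi]

lemma sxi_succ (k : ℕ) :
    sxi (k+1) = ∑ i ∈ Finset.range (k+1), (xi (k+1-i)) ^ (2^i) * sxi i := by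
  rw [sxi, ← Finset.sum_attach (Finset.range (k+1)) (fun i => (xi (k+1-i)) ^ (2^i) * sxi i)]

noncomputable def sxi' : ℕ → Am
  | 0 => 1
  | (k+1) => ∑ i ∈ (Finset.range (k+1)).attach,
      (sxi' i) ^ (2 ^ (k+1 - (i : ℕ))) * xi (k+1 - (i : ℕ))
  decreasing_by exact Finset.mem_range.mp i.2

lemma sxi'_zero : sxi' 0 = 1 := by rw [sxi']

lemma sxi'_succ (k : ℕ) :
    sxi' (k+1) = ∑ i ∈ Finset.range (k+1), (sxi' i) ^ (2^(k+1-i)) * xi (k+1-i) := by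
  rw [sxi', ← Finset.sum_attach (Finset.range (k+1)) (fun i => (sxi' i) ^ (2^(k+1-i)) * xi (k+1-i))]

/-- coefficients of `g(f(X))` where `f(X) = ∑ fₙ X^(2^n)` etc. -/
noncomputable def cnv (f g : ℕ → Am) (k : ℕ) : Am :=
  ∑ p ∈ antidiagonal k, (f p.2) ^ (2 ^ p.1) * g p.1

noncomputable def ide (k : ℕ) : Am := if k = 0 then 1 else 0

lemma cnv_ide (f : ℕ → Am) : cnv f ide = f := by
  funext k
  rw [cnv, Finset.sum_eq_single (0, k)]
  · simp [ide]
  · rintro ⟨i, j⟩ hp hne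
    have hi : i ≠ 0 := by
      rintro rfl
      apply hne
      simp only [Finset.HasAntidiagonal.mem_antidiagonal, zero_add] at hp
      rw [hp]
    simp [ide, hi]
  · simp
lemma ide_cnv (g : ℕ → Am) : cnv ide g = g := by
  funext k
  rw [cnv, Finset.sum_eq_single (k, 0)]
  · simp [ide]
  · rintro ⟨i, j⟩ hp hne
    have hj : j ≠ 0 := by
      rintro rfl
      apply hne
      simp only [Finset.HasAntidiagonal.mem_antidiagonal, add_zero] at hp
      rw [hp]
    simp [ide, hj, zero_pow (pow_ne_zero _ (two_ne_zero))]
  · simp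

end Stmt16aux

namespace Stage2
open Stmt16aux Finset

lemma cnv_assoc (f g h : ℕ → Am) : cnv f (cnv g h) = cnv (cnv f g) h := by
  funext k
  have hL : cnv f (cnv g h) k
      = ∑ p ∈ antidiagonal k, ∑ q ∈ antidiagonal p.1,
          (fun u v w => f w ^ 2 ^ (v + u) * (g v ^ 2 ^ u * h u)) q.1 q.2 p.2 := by
    rw [cnv]
    refine Finset.sum_congr rfl fun p _ => ?_
    rw [cnv, Finset.mul_sum]
    refine Finset.sum_congr rfl fun q hq => ?_
    rw [Finset.HasAntidiagonal.mem_antidiagonal] at hq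
    simp only
    rw [show p.1 = q.2 + q.1 from by omega]
  have hR : cnv (cnv f g) h k
      = ∑ p ∈ antidiagonal k, ∑ q ∈ antidiagonal p.2,
          (fun u v w => f w ^ 2 ^ (v + u) * (g v ^ 2 ^ u * h u)) p.1 q.1 q.2 := by
    rw [cnv]
    refine Finset.sum_congr rfl fun p _ => ?_
    rw [cnv, sum_pow_char_pow, Finset.sum_mul]
    refine Finset.sum_congr rfl fun q _ => ?_
    simp only
    rw [mul_pow, ← pow_mul, ← pow_add, mul_assoc]
  rw [hL, hR]
  exact (sum_ad_assoc k (fun u v w => f w ^ 2 ^ (v + u) * (g v ^ 2 ^ u * h u))).symm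

lemma cnv_xi_sxi : cnv xi sxi = ide := by
  funext k
  cases k with
  | zero => simp [cnv, ide, sxi_zero, xi_zero]
  | succ n =>
    rw [cnv, Finset.Nat.sum_antidiagonal_eq_sum_range_succ
        (fun i j => (xi j) ^ (2 ^ i) * sxi i), Finset.sum_range_succ]
    simp only [Nat.sub_self, xi_zero, one_pow, one_mul]
    rw [← sxi_succ, CharTwo.add_self_eq_zero]
    simp [ide]

lemma cnv_sxi'_xi : cnv sxi' xi = ide := by
  funext k
  cases k with
  | zero => simp [cnv, ide, sxi'_zero, xi_zero]
  | succ n =>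
    rw [cnv, Finset.Nat.sum_antidiagonal_eq_sum_range_succ
        (fun i j => (sxi' j) ^ (2 ^ i) * xi i), Finset.sum_range_succ']
    simp only [Nat.sub_zero, pow_zero, pow_one, xi_zero, mul_one]
    have : ∑ i ∈ Finset.range (n+1), sxi' (n + 1 - (i+1)) ^ 2 ^ (i+1) * xi (i+1)
        = sxi' (n+1) := by
      rw [sxi'_succ, ← Finset.sum_range_reflect
        (fun j => (sxi' j) ^ (2^(n+1-j)) * xi (n+1-j)) (n+1)]
      refine Finset.sum_congr rfl fun j hj => ?_
      rw [Finset.mem_range] at hj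
      beta_reduce
      rw [show n + 1 - 1 - j = n - j from by omega,
        show n + 1 - (n - j) = j + 1 from by omega,
        show n + 1 - (j + 1) = n - j from by omega]
    rw [this, CharTwo.add_self_eq_zero]
    simp [ide]

lemma sxi'_eq_sxi : sxi' = sxi := by
  have h := cnv_assoc sxi' xi sxi
  rwa [cnv_xi_sxi, cnv_sxi'_xi, cnv_ide, ide_cnv] at h

lemma cnv_sxi_xi : cnv sxi xi = ide := by rw [← sxi'_eq_sxi]; exact cnv_sxi'_xi

end Stage2

namespace Stage3
open Stmt16aux Stage2 Finset TensorProduct MvPolynomial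

noncomputable abbrev Bm := Am ⊗[ZMod 2] Am

noncomputable def dxi (k : ℕ) : Bm :=
  ∑ p ∈ antidiagonal k, ((xi p.2) ^ (2 ^ p.1)) ⊗ₜ[ZMod 2] (xi p.1)

lemma dxi_zero : dxi 0 = 1 := by
  simp [dxi, xi_zero, Algebra.TensorProduct.one_def]

noncomputable def Dh : Am →ₐ[ZMod 2] Bm := aeval fun n => dxi (n+1)
noncomputable def Eh : Am →ₐ[ZMod 2] ZMod 2 := aeval fun _ => 0
noncomputable def Sh : Am →ₐ[ZMod 2] Am := aeval fun n => sxi (n+1)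

lemma Dh_X (n : ℕ) : Dh (X n) = dxi (n+1) := aeval_X _ n
lemma Dh_xi (k : ℕ) : Dh (xi k) = dxi k := by
  cases k with
  | zero => rw [xi_zero, map_one, dxi_zero]
  | succ n => rw [xi_succ]; exact Dh_X n
lemma Eh_X (n : ℕ) : Eh (X n) = 0 := aeval_X _ n
lemma Sh_X (n : ℕ) : Sh (X n) = sxi (n+1) := aeval_X _ n
lemma Sh_xi (k : ℕ) : Sh (xi k) = sxi k := by
  cases k with
  | zero => rw [xi_zero, map_one, sxi_zero]
  | succ n => rw [xi_succ]; exact Sh_X n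

noncomputable def EE : Bm →ₐ[ZMod 2] ZMod 2 :=
  (Algebra.TensorProduct.lmul' (ZMod 2) (S := ZMod 2)).comp (Algebra.TensorProduct.map Eh Eh)

instance : Nontrivial Bm := EE.toRingHom.domain_nontrivial
instance : CharP Bm 2 :=
  charP_of_injective_algebraMap (algebraMap (ZMod 2) Bm).injective 2

lemma dxi_pow (j i : ℕ) :
    (dxi j) ^ (2 ^ i)
      = ∑ q ∈ antidiagonal j, ((xi q.2) ^ (2 ^ (q.1 + i))) ⊗ₜ[ZMod 2] ((xi q.1) ^ (2 ^ i)) := by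
  rw [dxi, sum_pow_char_pow]
  refine Finset.sum_congr rfl fun q _ => ?_
  rw [Algebra.TensorProduct.tmul_pow, ← pow_mul, ← pow_add]

lemma algHom_rTensor {C D E : Type} [CommRing C] [CommRing D] [CommRing E]
    [Algebra (ZMod 2) C] [Algebra (ZMod 2) D] [Algebra (ZMod 2) E]
    (f : C →ₐ[ZMod 2] D) (x : C ⊗[ZMod 2] E) :
    f.toLinearMap.rTensor E x = Algebra.TensorProduct.map f (AlgHom.id (ZMod 2) E) x := by
  induction x using TensorProduct.induction_on with
  | zero => simp
  | tmul a b => simp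
  | add x y hx hy => rw [map_add, map_add, hx, hy]

lemma algHom_lTensor {C D E : Type} [CommRing C] [CommRing D] [CommRing E]
    [Algebra (ZMod 2) C] [Algebra (ZMod 2) D] [Algebra (ZMod 2) E]
    (f : C →ₐ[ZMod 2] D) (x : E ⊗[ZMod 2] C) :
    f.toLinearMap.lTensor E x = Algebra.TensorProduct.map (AlgHom.id (ZMod 2) E) f x := by
  induction x using TensorProduct.induction_on with
  | zero => simp
  | tmul a b => simp
  | add x y hx hy => rw [map_add, map_add, hx, hy]

lemma mul'_eq (x : Bm) :
    LinearMap.mul' (ZMod 2) Am x = Algebra.TensorProduct.lmul' (ZMod 2) (S := Am) x := by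
  induction x using TensorProduct.induction_on with
  | zero => rw [map_zero, map_zero]
  | tmul a b => rw [LinearMap.mul'_apply, Algebra.TensorProduct.lmul'_apply_tmul]
  | add x y hx hy => rw [map_add, map_add, hx, hy]

lemma coassoc_alg :
    (Algebra.TensorProduct.assoc (ZMod 2) (ZMod 2) (ZMod 2) Am Am Am).toAlgHom.comp
      ((Algebra.TensorProduct.map Dh (AlgHom.id (ZMod 2) Am)).comp Dh)
    = (Algebra.TensorProduct.map (AlgHom.id (ZMod 2) Am) Dh).comp Dh := by
  refine MvPolynomial.algHom_ext fun n => ?_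
  simp only [AlgHom.coe_comp, Function.comp_apply, AlgEquiv.toAlgHom_eq_coe,
    AlgHom.coe_coe, Dh_X]
  have hL : (Algebra.TensorProduct.assoc (ZMod 2) (ZMod 2) (ZMod 2) Am Am Am)
        ((Algebra.TensorProduct.map Dh (AlgHom.id (ZMod 2) Am)) (dxi (n+1)))
      = ∑ p ∈ antidiagonal (n+1), ∑ q ∈ antidiagonal p.2,
          (fun u v w => ((xi w) ^ (2^(v+u))) ⊗ₜ[ZMod 2] (((xi v) ^ (2^u)) ⊗ₜ[ZMod 2] (xi u)))
            p.1 q.1 q.2 := by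
    rw [dxi, map_sum, map_sum]
    refine Finset.sum_congr rfl fun p _ => ?_
    rw [Algebra.TensorProduct.map_tmul, map_pow, Dh_xi, AlgHom.coe_id, id_eq,
      dxi_pow, TensorProduct.sum_tmul, map_sum]
    refine Finset.sum_congr rfl fun q _ => ?_
    rw [Algebra.TensorProduct.assoc_tmul]
  have hR : (Algebra.TensorProduct.map (AlgHom.id (ZMod 2) Am) Dh) (dxi (n+1))
      = ∑ p ∈ antidiagonal (n+1), ∑ q ∈ antidiagonal p.1,
          (fun u v w => ((xi w) ^ (2^(v+u))) ⊗ₜ[ZMod 2] (((xi v) ^ (2^u)) ⊗ₜ[ZMod 2] (xi u)))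
            q.1 q.2 p.2 := by
    rw [dxi, map_sum]
    refine Finset.sum_congr rfl fun p hp => ?_
    rw [Algebra.TensorProduct.map_tmul, AlgHom.coe_id, id_eq, Dh_xi, dxi,
      TensorProduct.tmul_sum]
    refine Finset.sum_congr rfl fun q hq => ?_
    rw [Finset.HasAntidiagonal.mem_antidiagonal] at hq
    beta_reduce
    rw [show p.1 = q.2 + q.1 from by omega]
  refine hL.trans ?_
  rw [hR]
  exact sum_ad_assoc (n+1)
    (fun u v w => ((xi w) ^ (2^(v+u))) ⊗ₜ[ZMod 2] (((xi v) ^ (2^u)) ⊗ₜ[ZMod 2] (xi u)))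

lemma counitL_alg :
    (Algebra.TensorProduct.map Eh (AlgHom.id (ZMod 2) Am)).comp Dh
      = Algebra.TensorProduct.includeRight := by
  refine MvPolynomial.algHom_ext fun n => ?_
  simp only [AlgHom.coe_comp, Function.comp_apply, Dh_X,
    Algebra.TensorProduct.includeRight_apply]
  rw [dxi, map_sum, Finset.sum_eq_single (n+1, 0)]
  · simp [xi_zero, xi_succ]
  · rintro ⟨i, j⟩ hp hne
    have hj : j ≠ 0 := by
      rintro rfl
      apply hne
      rw [Finset.HasAntidiagonal.mem_antidiagonal] at hp
      have : i = n + 1 := by simpa using hp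
      rw [this]
    obtain ⟨m, rfl⟩ := Nat.exists_eq_succ_of_ne_zero hj
    rw [Algebra.TensorProduct.map_tmul, map_pow]
    simp only [xi_succ, Eh_X]
    rw [zero_pow (pow_ne_zero _ two_ne_zero), TensorProduct.zero_tmul]
  · intro h; exact absurd (Finset.HasAntidiagonal.mem_antidiagonal.mpr (by omega)) h

lemma counitR_alg :
    (Algebra.TensorProduct.map (AlgHom.id (ZMod 2) Am) Eh).comp Dh
      = Algebra.TensorProduct.includeLeft := by
  refine MvPolynomial.algHom_ext fun n => ?_
  simp only [AlgHom.coe_comp, Function.comp_apply, Dh_X,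
    Algebra.TensorProduct.includeLeft_apply]
  rw [dxi, map_sum, Finset.sum_eq_single (0, n+1)]
  · simp [xi_zero, xi_succ]
  · rintro ⟨i, j⟩ hp hne
    have hi : i ≠ 0 := by
      rintro rfl
      apply hne
      rw [Finset.HasAntidiagonal.mem_antidiagonal] at hp
      have : j = n + 1 := by simpa using hp
      rw [this]
    obtain ⟨m, rfl⟩ := Nat.exists_eq_succ_of_ne_zero hi
    rw [Algebra.TensorProduct.map_tmul]
    simp only [xi_succ, Eh_X, TensorProduct.tmul_zero]
  · intro h; exact absurd (Finset.HasAntidiagonal.mem_antidiagonal.mpr (by omega)) h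

end Stage3

namespace Stage4
open Stmt16aux Stage2 Stage3 Finset TensorProduct MvPolynomial

lemma antipodeL_alg :
    (Algebra.TensorProduct.lmul' (ZMod 2) (S := Am)).comp
        ((Algebra.TensorProduct.map Sh (AlgHom.id (ZMod 2) Am)).comp Dh)
      = (Algebra.ofId (ZMod 2) Am).comp Eh := by
  refine MvPolynomial.algHom_ext fun n => ?_
  simp only [AlgHom.coe_comp, Function.comp_apply, Dh_X, Eh_X, map_zero]
  rw [dxi, map_sum, map_sum]
  have h1 : ∀ p ∈ antidiagonal (n+1),
      Algebra.TensorProduct.lmul' (ZMod 2) (S := Am)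
        ((Algebra.TensorProduct.map Sh (AlgHom.id (ZMod 2) Am))
          (((xi p.2) ^ (2 ^ p.1)) ⊗ₜ[ZMod 2] (xi p.1)))
      = (sxi p.2) ^ (2 ^ p.1) * xi p.1 := by
    intro p _
    rw [Algebra.TensorProduct.map_tmul, map_pow, Sh_xi, AlgHom.coe_id, id_eq,
      Algebra.TensorProduct.lmul'_apply_tmul]
  rw [Finset.sum_congr rfl h1]
  have h2 := congrFun cnv_sxi_xi (n+1)
  rw [cnv] at h2
  rw [h2]
  simp [ide]

lemma antipodeR_alg :
    (Algebra.TensorProduct.lmul' (ZMod 2) (S := Am)).comp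
        ((Algebra.TensorProduct.map (AlgHom.id (ZMod 2) Am) Sh).comp Dh)
      = (Algebra.ofId (ZMod 2) Am).comp Eh := by
  refine MvPolynomial.algHom_ext fun n => ?_
  simp only [AlgHom.coe_comp, Function.comp_apply, Dh_X, Eh_X, map_zero]
  rw [dxi, map_sum, map_sum]
  have h1 : ∀ p ∈ antidiagonal (n+1),
      Algebra.TensorProduct.lmul' (ZMod 2) (S := Am)
        ((Algebra.TensorProduct.map (AlgHom.id (ZMod 2) Am) Sh)
          (((xi p.2) ^ (2 ^ p.1)) ⊗ₜ[ZMod 2] (xi p.1)))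
      = (xi p.2) ^ (2 ^ p.1) * sxi p.1 := by
    intro p _
    rw [Algebra.TensorProduct.map_tmul, Sh_xi, AlgHom.coe_id, id_eq,
      Algebra.TensorProduct.lmul'_apply_tmul]
  rw [Finset.sum_congr rfl h1]
  have h2 := congrFun cnv_xi_sxi (n+1)
  rw [cnv] at h2
  rw [h2]
  simp [ide]

noncomputable def coalg : Coalgebra (ZMod 2) Am where
  comul := Dh.toLinearMap
  counit := Eh.toLinearMap
  coassoc := by
    refine LinearMap.ext fun a => ?_
    have h := AlgHom.congr_fun coassoc_alg a
    simp only [AlgHom.coe_comp, Function.comp_apply, AlgEquiv.toAlgHom_eq_coe,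
      AlgHom.coe_coe] at h
    simp only [LinearMap.coe_comp, Function.comp_apply, LinearEquiv.coe_coe,
      AlgHom.toLinearMap_apply]
    rw [algHom_rTensor, algHom_lTensor]
    exact h
  rTensor_counit_comp_comul := by
    refine LinearMap.ext fun a => ?_
    have h := AlgHom.congr_fun counitL_alg a
    simp only [AlgHom.coe_comp, Function.comp_apply,
      Algebra.TensorProduct.includeRight_apply] at h
    simp only [LinearMap.coe_comp, Function.comp_apply, AlgHom.toLinearMap_apply,
      TensorProduct.mk_apply]
    rw [algHom_rTensor]
    exact h
  lTensor_counit_comp_comul := by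
    refine LinearMap.ext fun a => ?_
    have h := AlgHom.congr_fun counitR_alg a
    simp only [AlgHom.coe_comp, Function.comp_apply,
      Algebra.TensorProduct.includeLeft_apply] at h
    simp only [LinearMap.coe_comp, Function.comp_apply, AlgHom.toLinearMap_apply,
      LinearMap.flip_apply, TensorProduct.mk_apply]
    rw [algHom_lTensor]
    exact h

noncomputable def bialg : Bialgebra (ZMod 2) Am :=
  letI := coalg
  Bialgebra.mk' (ZMod 2) Am (map_one Eh) (fun {a b} => map_mul Eh a b)
    (map_one Dh) (fun {a b} => map_mul Dh a b)

noncomputable def hopf : HopfAlgebra (ZMod 2) Am :=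
  { bialg with
    antipode := Sh.toLinearMap
    mul_antipode_rTensor_comul := by
      refine LinearMap.ext fun a => ?_
      have h := AlgHom.congr_fun antipodeL_alg a
      simp only [AlgHom.coe_comp, Function.comp_apply] at h
      simp only [LinearMap.coe_comp, Function.comp_apply, AlgHom.toLinearMap_apply,
        Algebra.linearMap_apply]
      exact (congrArg (LinearMap.mul' (ZMod 2) Am)
        (algHom_rTensor Sh (Dh a))).trans ((mul'_eq _).trans h)
    mul_antipode_lTensor_comul := by
      refine LinearMap.ext fun a => ?_
      have h := AlgHom.congr_fun antipodeR_alg a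
      simp only [AlgHom.coe_comp, Function.comp_apply] at h
      simp only [LinearMap.coe_comp, Function.comp_apply, AlgHom.toLinearMap_apply,
        Algebra.linearMap_apply]
      exact (congrArg (LinearMap.mul' (ZMod 2) Am)
        (algHom_lTensor Sh (Dh a))).trans ((mul'_eq _).trans h) }

end Stage4


/-- the polynomial ring `A = F₂[ξ₁, ξ₂, ...]` carries a Hopf algebra
structure over `F₂` (compatible with its canonical `F₂`-algebra structure) whose
comultiplication is `Δ(ξ_k) = ∑_{i+j=k} ξ_j^(2^i) ⊗ ξ_i` (with `ξ₀ = 1`), induced by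
composition of strict automorphisms of the additive formal group law. -/
theorem stmt16 :
    ∃ inst : HopfAlgebra (ZMod 2) (MvPolynomial ℕ (ZMod 2)),
      inst.toAlgebra = AddMonoidAlgebra.algebra ∧
      ∀ k : ℕ, 1 ≤ k →
        @CoalgebraStruct.comul (ZMod 2) (MvPolynomial ℕ (ZMod 2)) _ _
            (@Algebra.toModule _ _ _ _ inst.toAlgebra) inst.toCoalgebraStruct (xi k)
          = ∑ p ∈ Finset.HasAntidiagonal.antidiagonal k,
              @TensorProduct.tmul (ZMod 2) _ _ _ _ _
                (@Algebra.toModule _ _ _ _ inst.toAlgebra)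
                (@Algebra.toModule _ _ _ _ inst.toAlgebra)
                ((xi p.2) ^ (2 ^ p.1)) (xi p.1) := by
  refine ⟨Stage4.hopf, rfl, fun k hk => ?_⟩
  show Stage3.Dh.toLinearMap (xi k) = _
  rw [AlgHom.toLinearMap_apply, Stage3.Dh_xi, Stage3.dxi]
  rfl
end
end
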